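/- Let (φ_n)_{n∈ℕ} be a depth-bounded fuzzy simulation between fuzzy automata A and A'. Then for every n ∈ ℕ, every pair (x, x') ∈ A × A', and every word u = s_1…s_k over Σ with k ≤ n: φ_n(x, x') ⊗ (δ^A_{s_1} ∘ … ∘ δ^A_{s_k} ∘ τ^A)(x) ≤ (δ^{A'}_{s_1} ∘ … ∘ δ^{A'}_{s_k} ∘ τ^{A'})(x'). -/
import Mathlib


/-- A complete residuated lattice: a complete lattice where `⟨L, *, 1⟩` is a
commutative monoid with unit `1 = ⊤`, and the adjunction property holds. -/
class CompleteResiduatedLattice (L : Type*) extends CompleteLattice L, CommMonoid L where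
  rimp : L → L → L
  adjunction : ∀ x y z : L, x * y ≤ z ↔ x ≤ rimp y z
  one_eq_top : (1 : L) = ⊤

open CompleteResiduatedLattice

/-- A fuzzy automaton over alphabet `S` with state set `A`:
fuzzy transition function `δ`, fuzzy set of initial states `σ`,
fuzzy set of terminal states `τ`. -/
structure FuzzyAutomaton (L : Type*) [CompleteResiduatedLattice L] (S A : Type*) where
  δ : S → A → A → L
  σ : A → L
  τ : A → L

variable {L : Type*} [CompleteResiduatedLattice L]

/-- `(φ_n)_{n∈ℕ}` is a depth-bounded fuzzy simulation between `M` and `M'`: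
(1) the sequence is decreasing; (2) `φ₀⁻¹ ∘ τ ≤ τ'`;
(3) `φ_n⁻¹ ∘ δ_s ≤ δ'_s ∘ φ_{n-1}⁻¹` for `n ≥ 1`. -/
def IsDBFS {S A A' : Type*} (M : FuzzyAutomaton L S A) (M' : FuzzyAutomaton L S A')
    (φ : ℕ → A → A' → L) : Prop :=
  (∀ n x x', φ (n + 1) x x' ≤ φ n x x') ∧
  (∀ x', (⨆ x, φ 0 x x' * M.τ x) ≤ M'.τ x') ∧
  (∀ s n x' y, (⨆ x, φ (n + 1) x x' * M.δ s x y) ≤ ⨆ y', M'.δ s x' y' * φ n y y')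

/-- The degree `(δ_{s₁} ∘ … ∘ δ_{s_k} ∘ τ)(x)` in which the automaton `M`
started at state `x` accepts the word `s₁…s_k`. -/
def accept {S A : Type*} (M : FuzzyAutomaton L S A) : List S → A → L
  | [], x => M.τ x
  | s :: w, x => ⨆ y, M.δ s x y * accept M w y

lemma crl_mul_le_mul_left {a b c : L} (h : a ≤ b) : a * c ≤ b * c :=
  (adjunction a c (b * c)).mpr (h.trans ((adjunction b c (b * c)).mp le_rfl))

lemma crl_mul_le_mul_right {a b c : L} (h : a ≤ b) : c * a ≤ c * b := by
  rw [mul_comm c a, mul_comm c b]; exact crl_mul_le_mul_left h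

lemma crl_iSup_mul {ι : Type*} (f : ι → L) (y : L) :
    (⨆ i, f i) * y = ⨆ i, f i * y := by
  apply le_antisymm
  · rw [adjunction]
    exact iSup_le fun i => (adjunction _ _ _).mp (le_iSup (fun i => f i * y) i)
  · exact iSup_le fun i => crl_mul_le_mul_left (le_iSup f i)

lemma crl_mul_iSup {ι : Type*} (f : ι → L) (y : L) :
    y * (⨆ i, f i) = ⨆ i, y * f i := by
  rw [mul_comm, crl_iSup_mul]; simp [mul_comm]

lemma crl_phi_anti {S A A' : Type*} (M : FuzzyAutomaton L S A) (M' : FuzzyAutomaton L S A')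
    (φ : ℕ → A → A' → L) (hφ : IsDBFS M M' φ) {m n : ℕ} (h : m ≤ n) (x : A) (x' : A') :
    φ n x x' ≤ φ m x x' := by
  induction n with
  | zero => simp_all
  | succ k ih =>
    rcases Nat.lt_or_ge m (k + 1) with hlt | hge
    · exact (hφ.1 k x x').trans (ih (Nat.lt_succ_iff.mp hlt))
    · have : m = k + 1 := le_antisymm h hge
      subst this; exact le_rfl

theorem stmt12 {S A A' : Type*} [Nonempty A] [Nonempty A']
    (M : FuzzyAutomaton L S A) (M' : FuzzyAutomaton L S A')
    (φ : ℕ → A → A' → L) (hφ : IsDBFS M M' φ)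
    (n : ℕ) (x : A) (x' : A') (u : List S) (hu : u.length ≤ n) :
    φ n x x' * accept M u x ≤ accept M' u x' := by
  induction u generalizing n x x' with
  | nil =>
    calc φ n x x' * accept M [] x ≤ φ 0 x x' * M.τ x :=
          crl_mul_le_mul_left (crl_phi_anti M M' φ hφ (Nat.zero_le n) x x')
      _ ≤ ⨆ y, φ 0 y x' * M.τ y := le_iSup (fun y => φ 0 y x' * M.τ y) x
      _ ≤ accept M' [] x' := hφ.2.1 x'
  | cons s w ih =>
    simp only [List.length_cons] at hu
    have hn : w.length + 1 ≤ n := hu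
    show φ n x x' * accept M (s :: w) x ≤ accept M' (s :: w) x'
    rw [show accept M (s :: w) x = ⨆ y, M.δ s x y * accept M w y from rfl,
      crl_mul_iSup]
    apply iSup_le fun y => ?_
    calc φ n x x' * (M.δ s x y * accept M w y)
        = (φ n x x' * M.δ s x y) * accept M w y := (mul_assoc _ _ _).symm
      _ ≤ ((⨆ y', M'.δ s x' y' * φ w.length y y')) * accept M w y := by
          apply crl_mul_le_mul_left
          calc φ n x x' * M.δ s x y
              ≤ φ (w.length + 1) x x' * M.δ s x y :=
                crl_mul_le_mul_left (crl_phi_anti M M' φ hφ hn x x')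
            _ ≤ ⨆ z, φ (w.length + 1) z x' * M.δ s z y :=
                le_iSup (fun z => φ (w.length + 1) z x' * M.δ s z y) x
            _ ≤ ⨆ y', M'.δ s x' y' * φ w.length y y' := hφ.2.2 s w.length x' y
      _ = ⨆ y', (M'.δ s x' y' * φ w.length y y') * accept M w y :=
          crl_iSup_mul _ _
      _ ≤ ⨆ y', M'.δ s x' y' * accept M' w y' := by
          apply iSup_le fun y' => ?_
          rw [mul_assoc]
          refine (le_iSup (fun y' => M'.δ s x' y' * accept M' w y') y').trans' ?_
          exact crl_mul_le_mul_right (ih w.length y y' le_rfl)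
      _ = accept M' (s :: w) x' := rfl
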